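/- Let H_code = H_a ⊗ H_{ā} and H = H_A ⊗ H_{Ā} with a family of orthonormal vectors |ĩj⟩ ∈ H indexed by i ∈ {1,…,|a|}, j ∈ {1,…,|ā|}. Suppose there exist a unitary U on H acting as U_A ⊗ U_{Ā}, decompositions H_A ⊇ H_{A₁} ⊗ H_{A₂} and H_{Ā} ⊇ H_{Ā₁} ⊗ H_{Ā₂} with |A₁| = |a|, |Ā₁| = |ā|, and a unit vector |χ⟩ ∈ H_{A₂} ⊗ H_{Ā₂}, such that |ĩj⟩ = U(|i⟩_{A₁} |j⟩_{Ā₁} |χ⟩). Then for any probability distribution p_{ij} and ρ̃ = Σ_{ij} p_{ij} |ĩj⟩⟨ĩj|, the reduced states satisfy S(ρ̃_A) = S(χ_{A₂}) + S(ρ̃_a), where ρ̃_A = Tr_{Ā}(ρ̃), ρ̃_a = Σ_i p_i |i⟩⟨i| with p_i = Σ_j p_{ij}, and χ_{A₂} = Tr_{Ā₂}|χ⟩⟨χ|. -/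

import Mathlib

/-! Tracing out `Ā` removes the isometry `U_Ā W_Ā` and leaves `ρ̃_A = V (ρ̃_a ⊗ χ_{A₂}) V†` with
`V = U_A W_A` an isometry. Conjugating by an isometry only adds zero eigenvalues, which carry no
entropy, and the eigenvalues of `ρ̃_a ⊗ χ_{A₂}` are the products of those of the factors, so the
entropy is additive because both factors have unit trace. -/

open scoped BigOperators ComplexOrder Kronecker
open Matrix

variable {A₁ A₂ Ab₁ Ab₂ A Ab : Type*}
  [Fintype A₁] [DecidableEq A₁] [Fintype A₂] [DecidableEq A₂]
  [Fintype Ab₁] [DecidableEq Ab₁] [Fintype Ab₂] [DecidableEq Ab₂]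
  [Fintype A] [DecidableEq A] [Fintype Ab] [DecidableEq Ab]

/-- Von Neumann entropy of a Hermitian matrix (junk value `0` otherwise). -/
noncomputable def vnEntropy {n : Type*} [Fintype n] [DecidableEq n]
    (M : Matrix n n ℂ) : ℝ :=
  if h : M.IsHermitian then ∑ i, Real.negMulLog (h.eigenvalues i) else 0

/-- Outer product `|ψ⟩⟨ψ|`. -/
noncomputable def outer {n : Type*} (ψ : n → ℂ) : Matrix n n ℂ :=
  fun p q => ψ p * star (ψ q)

/-- The product vector `|i⟩_{A₁} |j⟩_{Ā₁} |χ⟩_{A₂Ā₂}`. -/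
noncomputable def prodVec (χ : A₂ × Ab₂ → ℂ) (i : A₁) (j : Ab₁) :
    (A₁ × A₂) × (Ab₁ × Ab₂) → ℂ :=
  fun q => (if q.1.1 = i then 1 else 0) * (if q.2.1 = j then 1 else 0) * χ (q.1.2, q.2.2)

namespace Matrix

theorem IsHermitian.kronecker {R n m : Type*} [CommSemiring R] [StarRing R] {M : Matrix n n R}
    {N : Matrix m m R} (hM : M.IsHermitian) (hN : N.IsHermitian) : (M ⊗ₖ N).IsHermitian := by
  rw [IsHermitian, conjTranspose_kronecker, hM.eq, hN.eq]

theorem conjTranspose_mul_self_unitary_mul {R n m : Type*} [CommRing R] [StarRing R] [Fintype n]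
    [DecidableEq n] [Fintype m] [DecidableEq m] {U : Matrix n n R} (hU : U ∈ unitaryGroup n R)
    {W : Matrix n m R} (hW : Wᴴ * W = 1) : (U * W)ᴴ * (U * W) = 1 := by
  rw [conjTranspose_mul, Matrix.mul_assoc, ← Matrix.mul_assoc Uᴴ, ← star_eq_conjTranspose,
    hU.1, Matrix.one_mul, hW]

section RCLike

variable {𝕜 n : Type*} [RCLike 𝕜] [Fintype n] [DecidableEq n]

theorem IsHermitian.eq_conj_diagonal {M : Matrix n n 𝕜} (hM : M.IsHermitian) :
    M = (hM.eigenvectorUnitary : Matrix n n 𝕜) * diagonal (fun i => (hM.eigenvalues i : 𝕜))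
      * (hM.eigenvectorUnitary : Matrix n n 𝕜)ᴴ := by
  conv_lhs => rw [hM.spectral_theorem, Unitary.conjStarAlgAut_apply]
  rfl

theorem IsHermitian.sum_eigenvalues_eq_one {M : Matrix n n 𝕜} (hM : M.IsHermitian)
    (htr : M.trace = 1) : ∑ i, hM.eigenvalues i = 1 := by
  rw [hM.trace_eq_sum_eigenvalues] at htr
  exact_mod_cast htr

/- The powers of `X` let the spectrum of `N` and the values of `g` differ by zeros, on which
`f` vanishes. -/
open Polynomial in
theorem IsHermitian.sum_comp_eigenvalues_eq_of_charpoly {m : Type*} [Fintype m]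
    {N : Matrix n n 𝕜} (hN : N.IsHermitian) (g : m → ℝ)
    (h : X ^ Fintype.card m * N.charpoly = X ^ Fintype.card n * ∏ i, (X - C (g i : 𝕜)))
    {f : ℝ → ℝ} (hf : f 0 = 0) :
    ∑ i, f (hN.eigenvalues i) = ∑ i, f (g i) := by
  have hne : ∏ i, (X - C (g i : 𝕜)) ≠ 0 := by
    simp [Finset.prod_ne_zero_iff, X_sub_C_ne_zero]
  have hprod : (∏ i, (X - C (g i : 𝕜))).roots = Finset.univ.val.map (fun i => (g i : 𝕜)) := by
    rw [Polynomial.roots_prod _ _ hne]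
    simp
  have hroots : Fintype.card m • {0} + Finset.univ.val.map (RCLike.ofReal ∘ hN.eigenvalues)
      = Fintype.card n • {0} + Finset.univ.val.map (fun i => (g i : 𝕜)) := by
    have := congrArg roots h
    rwa [roots_mul (mul_ne_zero (pow_ne_zero _ X_ne_zero) N.charpoly_monic.ne_zero),
      roots_mul (mul_ne_zero (pow_ne_zero _ X_ne_zero) hne), roots_X_pow, roots_X_pow,
      hN.roots_charpoly_eq_eigenvalues, hprod] at this
  have := congrArg (fun s : Multiset 𝕜 => (s.map (f ∘ RCLike.re)).sum) hroots
  simp only [Multiset.map_add, Multiset.sum_add, Multiset.map_nsmul, Multiset.map_singleton,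
    Multiset.sum_nsmul, Multiset.sum_singleton, Function.comp_apply, map_zero, hf,
    smul_zero, zero_add, Multiset.map_map, RCLike.ofReal_re] at this
  exact this

end RCLike

section PartialTrace

variable {R : Type*} [CommSemiring R] {m m' k : Type*} [Fintype k]

def traceRight : Matrix (m × k) (m' × k) R →ₗ[R] Matrix m m' R where
  toFun M := of fun a a' => ∑ b, M (a, b) (a', b)
  map_add' M N := by ext; simp [Finset.sum_add_distrib]
  map_smul' c M := by ext; simp [Finset.mul_sum]

@[simp]
theorem traceRight_apply (M : Matrix (m × k) (m' × k) R) (a : m) (a' : m') :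
    traceRight M a a' = ∑ b, M (a, b) (a', b) :=
  rfl

theorem trace_traceRight [Fintype m] (M : Matrix (m × k) (m × k) R) :
    (traceRight M).trace = M.trace := by
  simp [trace, Fintype.sum_prod_type]

theorem IsHermitian.traceRight [StarRing R] {M : Matrix (m × k) (m × k) R}
    (hM : M.IsHermitian) : (Matrix.traceRight M).IsHermitian := by
  ext a a'
  simp only [conjTranspose_apply, traceRight_apply, star_sum]
  exact Finset.sum_congr rfl fun b _ => by rw [← conjTranspose_apply, hM.eq]

theorem traceRight_kronecker_mul_mul [StarRing R] [Fintype m] [Fintype m'] {n n' l : Type*}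
    [Fintype l] [DecidableEq k] (V : Matrix n m R) (V' : Matrix n' m' R) {W : Matrix l k R}
    (hW : Wᴴ * W = 1) (M : Matrix (m × k) (m' × k) R) :
    traceRight ((V ⊗ₖ W) * M * (V' ⊗ₖ W)ᴴ) = V * traceRight M * V'ᴴ := by
  have hW' : ∀ v v', ∑ b, W b v * star (W b v') = if v' = v then 1 else 0 := by
    intro v v'
    rw [← one_apply, ← hW, mul_apply]
    exact Finset.sum_congr rfl fun b _ => mul_comm _ _
  ext a a'
  simp only [traceRight_apply, mul_apply, conjTranspose_apply, kroneckerMap_apply,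
    Fintype.sum_prod_type, star_mul', Finset.sum_mul, Finset.mul_sum]
  rw [Finset.sum_comm]
  refine Finset.sum_congr rfl fun x _ => ?_
  conv_lhs => rw [Finset.sum_comm]
  conv_rhs => rw [Finset.sum_comm]
  refine Finset.sum_congr rfl fun x₁ _ => ?_
  conv_lhs => rw [Finset.sum_comm]
  refine Finset.sum_congr rfl fun x₂ _ => ?_
  -- only the `W`-factors depend on `b`, and summing them over `b` is an entry of `Wᴴ * W = 1`
  rw [Finset.sum_comm]
  simp_rw [show ∀ y b, V a x₂ * W b y * M (x₂, y) (x, x₁) * (star (V' a' x) * star (W b x₁))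
      = V a x₂ * M (x₂, y) (x, x₁) * star (V' a' x) * (W b y * star (W b x₁)) from
    fun _ _ => by ring, ← Finset.mul_sum, hW', mul_ite, mul_one, mul_zero,
    Finset.sum_ite_eq, Finset.mem_univ, if_true]

end PartialTrace

end Matrix

theorem sum_negMulLog_mul {ι κ : Type*} [Fintype ι] [Fintype κ] {a : ι → ℝ} {b : κ → ℝ}
    (ha : ∑ i, a i = 1) (hb : ∑ j, b j = 1) :
    ∑ x : ι × κ, Real.negMulLog (a x.1 * b x.2)
      = ∑ i, Real.negMulLog (a i) + ∑ j, Real.negMulLog (b j) := by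
  simp only [Fintype.sum_prod_type, Real.negMulLog_mul, Finset.sum_add_distrib,
    ← Finset.sum_mul, ← Finset.mul_sum, hb, ha, one_mul]

section Entropy

open Polynomial

variable {n : Type*} [Fintype n] [DecidableEq n]

theorem vnEntropy_eq_of_charpoly {m : Type*} [Fintype m] {N : Matrix n n ℂ} (hN : N.IsHermitian)
    (g : m → ℝ)
    (h : X ^ Fintype.card m * N.charpoly = X ^ Fintype.card n * ∏ i, (X - C (g i : ℂ))) :
    vnEntropy N = ∑ i, Real.negMulLog (g i) := by
  rw [vnEntropy, dif_pos hN]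
  exact hN.sum_comp_eigenvalues_eq_of_charpoly g h Real.negMulLog_zero

theorem vnEntropy_diagonal (d : n → ℝ) :
    vnEntropy (diagonal fun i => (d i : ℂ)) = ∑ i, Real.negMulLog (d i) :=
  vnEntropy_eq_of_charpoly (isHermitian_diagonal_of_self_adjoint _ (by ext; simp)) d
    (by rw [charpoly_diagonal])

theorem vnEntropy_conj_isometry {m : Type*} [Fintype m] [DecidableEq m] {V : Matrix n m ℂ}
    (hV : Vᴴ * V = 1) {M : Matrix m m ℂ} (hM : M.IsHermitian) :
    vnEntropy (V * M * Vᴴ) = vnEntropy M := by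
  rw [vnEntropy_eq_of_charpoly (isHermitian_mul_mul_conjTranspose V hM) hM.eigenvalues,
    vnEntropy, dif_pos hM]
  rw [charpoly_mul_comm', ← Matrix.mul_assoc, hV, Matrix.one_mul, hM.charpoly_eq]
  rfl

theorem vnEntropy_kronecker {m : Type*} [Fintype m] [DecidableEq m] {M : Matrix n n ℂ}
    {N : Matrix m m ℂ} (hM : M.IsHermitian) (hN : N.IsHermitian) (hMtr : M.trace = 1)
    (hNtr : N.trace = 1) :
    vnEntropy (M ⊗ₖ N) = vnEntropy M + vnEntropy N := by
  set U := (hM.eigenvectorUnitary : Matrix n n ℂ) ⊗ₖ (hN.eigenvectorUnitary : Matrix m m ℂ)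
  have hU : Uᴴ * U = 1 := by
    rw [← star_eq_conjTranspose]
    exact (kronecker_mem_unitary hM.eigenvectorUnitary.2 hN.eigenvectorUnitary.2).1
  have hMN : M ⊗ₖ N = U * diagonal (fun x => ((hM.eigenvalues x.1 * hN.eigenvalues x.2 : ℝ) : ℂ))
      * Uᴴ := by
    conv_lhs => rw [hM.eq_conj_diagonal, hN.eq_conj_diagonal]
    simp only [U, mul_kronecker_mul, diagonal_kronecker_diagonal, conjTranspose_kronecker,
      Complex.ofReal_mul]
    rfl
  rw [hMN, vnEntropy_conj_isometry hU (isHermitian_diagonal_of_self_adjoint _ (by ext; simp)),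
    vnEntropy_diagonal, sum_negMulLog_mul (hM.sum_eigenvalues_eq_one hMtr)
      (hN.sum_eigenvalues_eq_one hNtr), vnEntropy, vnEntropy, dif_pos hM, dif_pos hN]

end Entropy

theorem outer_eq_vecMulVec {n : Type*} (ψ : n → ℂ) : outer ψ = vecMulVec ψ (star ψ) :=
  rfl

theorem outer_mulVec {n m : Type*} [Fintype m] (M : Matrix n m ℂ) (ψ : m → ℂ) :
    outer (M *ᵥ ψ) = M * outer ψ * Mᴴ := by
  rw [outer_eq_vecMulVec, outer_eq_vecMulVec, mul_vecMulVec, vecMulVec_mul, star_mulVec]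

theorem isHermitian_outer {n : Type*} (ψ : n → ℂ) : (outer ψ).IsHermitian := by
  rw [IsHermitian, outer_eq_vecMulVec, conjTranspose_vecMulVec, star_star]

theorem trace_outer {n : Type*} [Fintype n] (ψ : n → ℂ) :
    (outer ψ).trace = ((∑ q, ‖ψ q‖ ^ 2 : ℝ) : ℂ) := by
  simp [trace, outer, Complex.mul_conj, Complex.normSq_eq_norm_sq]

section Encoding

variable {m₁ m₂ k₁ k₂ : Type*} [DecidableEq m₁] [DecidableEq k₁] [Fintype k₁] [Fintype k₂]

theorem traceRight_outer_prodVec (χ : m₂ × k₂ → ℂ) (i : m₁) (j : k₁) :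
    traceRight (outer (prodVec χ i j)) = single i i 1 ⊗ₖ traceRight (outer χ) := by
  ext ⟨x₁, x₂⟩ ⟨y₁, y₂⟩
  rcases eq_or_ne x₁ i with rfl | hx
  · rcases eq_or_ne y₁ x₁ with rfl | hy
    · simp [outer, prodVec, Fintype.sum_prod_type]
    · simp [outer, prodVec, hy, Ne.symm hy]
  · simp [outer, prodVec, hx, Ne.symm hx]

theorem traceRight_mixture_prodVec [Fintype m₁] (χ : m₂ × k₂ → ℂ) (p : m₁ → k₁ → ℝ) :
    traceRight (∑ i, ∑ j, (p i j : ℂ) • outer (prodVec χ i j))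
      = diagonal (fun i => ((∑ j, p i j : ℝ) : ℂ)) ⊗ₖ traceRight (outer χ) := by
  simp only [map_sum, map_smul, traceRight_outer_prodVec]
  ext ⟨x₁, x₂⟩ ⟨y₁, y₂⟩
  rcases eq_or_ne x₁ y₁ with rfl | h
  · simp [Matrix.sum_apply, single_apply, Finset.sum_mul]
  · have hne : ∀ c, ¬(c = x₁ ∧ c = y₁) := fun c hc => h (hc.1.symm.trans hc.2)
    simp [Matrix.sum_apply, hne, h]

theorem traceRight_encoded_mixture [Fintype m₁] [Fintype m₂] [DecidableEq k₂] {n l : Type*}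
    [Fintype l] (V : Matrix n (m₁ × m₂) ℂ) {W : Matrix l (k₁ × k₂) ℂ} (hW : Wᴴ * W = 1)
    (χ : m₂ × k₂ → ℂ) (p : m₁ → k₁ → ℝ) :
    traceRight (∑ i, ∑ j, (p i j : ℂ) • outer ((V ⊗ₖ W) *ᵥ prodVec χ i j))
      = V * (diagonal (fun i => ((∑ j, p i j : ℝ) : ℂ)) ⊗ₖ traceRight (outer χ)) * Vᴴ := by
  have hconj : ∑ i, ∑ j, (p i j : ℂ) • outer ((V ⊗ₖ W) *ᵥ prodVec χ i j)
      = (V ⊗ₖ W) * (∑ i, ∑ j, (p i j : ℂ) • outer (prodVec χ i j)) * (V ⊗ₖ W)ᴴ := by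
    simp only [outer_mulVec, Matrix.mul_sum, Matrix.sum_mul, Matrix.mul_smul, Matrix.smul_mul]
  rw [hconj, traceRight_kronecker_mul_mul V V hW, traceRight_mixture_prodVec]

end Encoding

theorem entropy_of_encoded_state_general
    (WA : Matrix A (A₁ × A₂) ℂ) (hWA : WAᴴ * WA = 1)
    (WAb : Matrix Ab (Ab₁ × Ab₂) ℂ) (hWAb : WAbᴴ * WAb = 1)
    (UA : Matrix A A ℂ) (hUA : UA ∈ Matrix.unitaryGroup A ℂ)
    (UAb : Matrix Ab Ab ℂ) (hUAb : UAb ∈ Matrix.unitaryGroup Ab ℂ)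
    (χ : A₂ × Ab₂ → ℂ) (hχ : ∑ q, ‖χ q‖ ^ 2 = 1)
    (p : A₁ → Ab₁ → ℝ) (hp1 : ∑ i, ∑ j, p i j = 1)
    -- the encoded states
    (code : A₁ → Ab₁ → (A × Ab → ℂ))
    (hcode : ∀ i j, code i j = ((UA * WA) ⊗ₖ (UAb * WAb)) *ᵥ prodVec χ i j)
    -- `ρ̃` and its reduced matrices
    (ρ : Matrix (A × Ab) (A × Ab) ℂ)
    (hρ : ρ = ∑ i, ∑ j, (p i j : ℂ) • outer (code i j))
    (ρA : Matrix A A ℂ) (hρA : ρA = fun a a' => ∑ b : Ab, ρ (a, b) (a', b))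
    (ρa : Matrix A₁ A₁ ℂ) (hρa : ρa = Matrix.diagonal fun i => ((∑ j, p i j : ℝ) : ℂ))
    (χA₂ : Matrix A₂ A₂ ℂ)
    (hχA₂ : χA₂ = fun x y => ∑ b : Ab₂, outer χ (x, b) (y, b)) :
    vnEntropy ρA = vnEntropy χA₂ + vnEntropy ρa := by
  have hV := conjTranspose_mul_self_unitary_mul hUA hWA
  have hW := conjTranspose_mul_self_unitary_mul hUAb hWAb
  replace hχA₂ : χA₂ = traceRight (outer χ) := hχA₂
  have hχA₂_herm : χA₂.IsHermitian := hχA₂ ▸ (isHermitian_outer χ).traceRight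
  have hχA₂_trace : χA₂.trace = 1 := by
    rw [hχA₂, trace_traceRight, trace_outer, hχ, Complex.ofReal_one]
  have hρa_herm : ρa.IsHermitian :=
    hρa ▸ isHermitian_diagonal_of_self_adjoint _ (by ext; simp)
  have hρa_trace : ρa.trace = 1 := by
    rw [hρa, trace_diagonal, ← Complex.ofReal_sum, hp1, Complex.ofReal_one]
  have hρA_conj : ρA = (UA * WA) * (ρa ⊗ₖ χA₂) * (UA * WA)ᴴ := by
    rw [show ρA = traceRight ρ from hρA, hρ, hρa, hχA₂]
    simp_rw [hcode]
    exact traceRight_encoded_mixture _ hW χ p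
  rw [hρA_conj, vnEntropy_conj_isometry hV (hρa_herm.kronecker hχA₂_herm),
    vnEntropy_kronecker hρa_herm hχA₂_herm hρa_trace hχA₂_trace, add_comm]

/-- Entropy formula `S(ρ̃_A) = S(χ_{A₂}) + S(ρ̃_a)` for encoded states of the
form `|ĩj⟩ = (U_A ⊗ U_Ā)(|i⟩_{A₁}|j⟩_{Ā₁}|χ⟩_{A₂Ā₂})`, where
`H_{A₁} ⊗ H_{A₂}` embeds isometrically in `H_A` via `W_A` (and likewise for `Ā`). -/
theorem entropy_of_encoded_state
    (WA : Matrix A (A₁ × A₂) ℂ) (hWA : WAᴴ * WA = 1)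
    (WAb : Matrix Ab (Ab₁ × Ab₂) ℂ) (hWAb : WAbᴴ * WAb = 1)
    (UA : Matrix A A ℂ) (hUA : UA ∈ Matrix.unitaryGroup A ℂ)
    (UAb : Matrix Ab Ab ℂ) (hUAb : UAb ∈ Matrix.unitaryGroup Ab ℂ)
    (χ : A₂ × Ab₂ → ℂ) (hχ : ∑ q, ‖χ q‖ ^ 2 = 1)
    (p : A₁ → Ab₁ → ℝ) (hp : ∀ i j, 0 ≤ p i j) (hp1 : ∑ i, ∑ j, p i j = 1)
    -- the encoded states
    (code : A₁ → Ab₁ → (A × Ab → ℂ))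
    (hcode : ∀ i j, code i j = ((UA * WA) ⊗ₖ (UAb * WAb)) *ᵥ prodVec χ i j)
    -- `ρ̃` and its reduced matrices
    (ρ : Matrix (A × Ab) (A × Ab) ℂ)
    (hρ : ρ = ∑ i, ∑ j, (p i j : ℂ) • outer (code i j))
    (ρA : Matrix A A ℂ) (hρA : ρA = fun a a' => ∑ b : Ab, ρ (a, b) (a', b))
    (ρa : Matrix A₁ A₁ ℂ) (hρa : ρa = Matrix.diagonal fun i => ((∑ j, p i j : ℝ) : ℂ))
    (χA₂ : Matrix A₂ A₂ ℂ)
    (hχA₂ : χA₂ = fun x y => ∑ b : Ab₂, outer χ (x, b) (y, b)) :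
    vnEntropy ρA = vnEntropy χA₂ + vnEntropy ρa :=
  entropy_of_encoded_state_general WA hWA WAb hWAb UA hUA UAb hUAb χ hχ p hp1 code hcode ρ hρ ρA hρA
    ρa hρa χA₂ hχA₂
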